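/- arXiv:1910.02151 — 3 statements merged into one kernel-verified Lean document; each statement's English description precedes it below -/
import Mathlib

section
/- For every n ≥ 1, the string S_n satisfies δ(S_n) ≤ 2; in fact, d_k(S_n) ≤ 2k holds for every k ∈ {1,...,n}. -/
/-- The set of distinct length-`k` contiguous substrings of `S`. -/
def substrings {α : Type} [DecidableEq α] (S : List α) (k : ℕ) : Finset (List α) :=
  ((Finset.range (S.length + 1)).image (fun i => (S.drop i).take k)).filter
    (fun t => t.length = k)

/-- `d_k(S)`: the number of distinct length-`k` substrings of `S`. -/
def subCount {α : Type} [DecidableEq α] (S : List α) (k : ℕ) : ℕ :=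
  (substrings S k).card

/-- The measure `δ(S) = max { d_k(S)/k : 1 ≤ k ≤ |S| }` (with value 0 for the empty string). -/
def delta {α : Type} [DecidableEq α] (S : List α) : ℚ :=
  if h : S = [] then 0
  else
    (Finset.Icc 1 S.length).sup'
      (Finset.nonempty_Icc.mpr (Nat.one_le_iff_ne_zero.mpr
        (fun h0 => h (List.length_eq_zero_iff.mp h0))))
      (fun k => (subCount S k : ℚ) / k)

/-- `Sn n`: the length-`n` prefix of the infinite string `S_∞` over `{a, b}`
(`a = false`, `b = true`) whose `i`-th character (1-based) is `b` iff `i` is a power of 2. -/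
def Sn (n : ℕ) : List Bool :=
  (List.range n).map (fun i => (List.range (i + 2)).any (fun j => i + 1 == 2 ^ j))

/-
The length-`k` window of `S_∞` at positions `i + 1, …, i + k` lies inside `[i + 1, 2(i + 1))`
once `k ≤ i + 1`, and such an interval contains at most one power of two; so the window is one
of the `k + 1` words with at most one `b`. The remaining windows, those with `i < k - 1`, number
at most `k - 1`, which gives at most `2k` in total.
-/
def window {α : Type} (f : ℕ → α) (i k : ℕ) : List α :=
  (List.range' i k).map f

theorem exists_window_of_mem_substrings {α : Type} [DecidableEq α] {f : ℕ → α} {n k : ℕ}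
    {t : List α} (ht : t ∈ substrings ((List.range n).map f) k) : ∃ i, t = window f i k := by
  simp only [substrings, Finset.mem_filter, Finset.mem_image] at ht
  obtain ⟨⟨i, -, rfl⟩, hlen⟩ := ht
  refine ⟨i, ?_⟩
  simp only [List.length_take, List.length_drop, List.length_map, List.length_range] at hlen
  rw [List.range_eq_range', ← List.map_drop, ← List.map_take, List.drop_range',
    List.take_range'_of_length_ge (by omega)]
  simp [window]

theorem delta_le_of_subCount_le {α : Type} [DecidableEq α] {S : List α} (c : ℕ)
    (h : ∀ k, 1 ≤ k → k ≤ S.length → subCount S k ≤ c * k) : delta S ≤ c := by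
  unfold delta
  split_ifs
  · positivity
  refine Finset.sup'_le _ _ fun k hk => ?_
  obtain ⟨hk1, hkS⟩ := Finset.mem_Icc.mp hk
  rw [div_le_iff₀ (by exact_mod_cast hk1)]
  exact_mod_cast h k hk1 hkS

/-- The character function of `S_∞`, indexed from `0`. -/
def sInfty (i : ℕ) : Bool := (List.range (i + 2)).any (fun j => i + 1 == 2 ^ j)

theorem Sn_eq_map_range (n : ℕ) : Sn n = (List.range n).map sInfty := rfl

theorem sInfty_eq_true_iff (i : ℕ) : sInfty i = true ↔ ∃ a, i + 1 = 2 ^ a := by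
  simp only [sInfty, List.any_eq_true, List.mem_range, beq_iff_eq]
  refine ⟨fun ⟨a, _, h⟩ => ⟨a, h⟩, fun ⟨a, h⟩ => ⟨a, ?_, h⟩⟩
  have := Nat.lt_two_pow_self (n := a)
  omega

theorem pow_two_eq_of_mem_Ico {m a b : ℕ} (ha : 2 ^ a ∈ Set.Ico m (2 * m))
    (hb : 2 ^ b ∈ Set.Ico m (2 * m)) : a = b := by
  have key : ∀ {a b}, 2 ^ a ∈ Set.Ico m (2 * m) → 2 ^ b ∈ Set.Ico m (2 * m) → a ≤ b := by
    intro a b ha hb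
    have : 2 ^ a < 2 ^ (b + 1) := by rw [pow_succ]; exact ha.2.trans_le (by linarith [hb.1])
    exact Nat.lt_succ_iff.mp ((Nat.pow_lt_pow_iff_right one_lt_two).mp this)
  exact le_antisymm (key ha hb) (key hb ha)

/-- The word of length `k` whose only `b` is at position `p` (no `b` at all when `k ≤ p`). -/
def unitWord (k p : ℕ) : List Bool := (List.range k).map (fun q => decide (q = p))

theorem exists_window_sInfty_eq_unitWord {i k : ℕ} (hik : k ≤ i + 1) :
    ∃ p ≤ k, window sInfty i k = unitWord k p := by
  have hwin : window sInfty i k = (List.range k).map (fun q => sInfty (i + q)) := by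
    rw [window, List.range'_eq_map_range, List.map_map]; rfl
  by_cases hb : ∃ p < k, sInfty (i + p) = true
  · obtain ⟨p, hpk, hp⟩ := hb
    refine ⟨p, hpk.le, ?_⟩
    rw [hwin, unitWord]
    refine List.map_congr_left fun q hq => ?_
    have hqk := List.mem_range.mp hq
    obtain ⟨a, ha⟩ := (sInfty_eq_true_iff _).mp hp
    refine Bool.eq_iff_iff.mpr ⟨fun hq' => ?_, fun hqp => ?_⟩
    · obtain ⟨b, hb⟩ := (sInfty_eq_true_iff _).mp hq'
      have hab : a = b := pow_two_eq_of_mem_Ico (m := i + 1)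
        ⟨by omega, by omega⟩ ⟨by omega, by omega⟩
      simp only [decide_eq_true_eq]
      subst hab
      omega
    · simp only [decide_eq_true_eq] at hqp
      subst hqp
      exact hp
  · push Not at hb
    refine ⟨k, le_rfl, ?_⟩
    rw [hwin, unitWord]
    refine List.map_congr_left fun q hq => ?_
    have hqk := List.mem_range.mp hq
    simp [hb q hqk, hqk.ne]

def sInftyWords (k : ℕ) : Finset (List Bool) :=
  (Finset.range (k - 1)).image (window sInfty · k) ∪ (Finset.range (k + 1)).image (unitWord k)

theorem window_sInfty_mem_sInftyWords (i k : ℕ) : window sInfty i k ∈ sInftyWords k := by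
  rw [sInftyWords, Finset.mem_union, Finset.mem_image, Finset.mem_image]
  by_cases hi : i < k - 1
  · exact Or.inl ⟨i, Finset.mem_range.mpr hi, rfl⟩
  · obtain ⟨p, hpk, hp⟩ := exists_window_sInfty_eq_unitWord (i := i) (k := k) (by omega)
    exact Or.inr ⟨p, Finset.mem_range.mpr (Nat.lt_succ_of_le hpk), hp.symm⟩

theorem card_sInftyWords_le {k : ℕ} (hk : 1 ≤ k) : (sInftyWords k).card ≤ 2 * k :=
  calc (sInftyWords k).card
      ≤ (Finset.range (k - 1)).card + (Finset.range (k + 1)).card :=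
        (Finset.card_union_le _ _).trans
          (add_le_add Finset.card_image_le Finset.card_image_le)
    _ = 2 * k := by simp only [Finset.card_range]; omega

theorem subCount_Sn_le {n k : ℕ} (hk : 1 ≤ k) : subCount (Sn n) k ≤ 2 * k := by
  refine le_trans (Finset.card_le_card fun t ht => ?_) (card_sInftyWords_le hk)
  rw [Sn_eq_map_range] at ht
  obtain ⟨i, rfl⟩ := exists_window_of_mem_substrings ht
  exact window_sInfty_mem_sInftyWords i k

theorem delta_Sn_le_two_general (n : ℕ) :
    (∀ k ∈ Finset.Icc 1 n, subCount (Sn n) k ≤ 2 * k) ∧ delta (Sn n) ≤ 2 := by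
  refine ⟨fun k hk => subCount_Sn_le (Finset.mem_Icc.mp hk).1, ?_⟩
  exact_mod_cast delta_le_of_subCount_le 2 fun k hk _ => subCount_Sn_le hk

/-- For every `n ≥ 1`, the string `S_n` satisfies `d_k(S_n) ≤ 2k` for every
`k ∈ {1,...,n}`; consequently `δ(S_n) ≤ 2`. -/
theorem delta_Sn_le_two (n : ℕ) (hn : 1 ≤ n) :
    (∀ k ∈ Finset.Icc 1 n, subCount (Sn n) k ≤ 2 * k) ∧ delta (Sn n) ≤ 2 :=
  delta_Sn_le_two_general n
end

section
/- For every n ≥ 1, every attractor of the string S_n has size at least ⌊log₂ n⌋/2; that is, γ(S_n) ≥ ⌊log₂ n⌋/2. -/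
/-- `Γ` is an attractor of `S`: every nonempty substring `S[i..j]` (1-based) has an
occurrence `S[i'..j']` covering a position of `Γ`. -/
def IsAttractor {α : Type} (S : List α) (Γ : Finset ℕ) : Prop :=
  (∀ p ∈ Γ, 1 ≤ p ∧ p ≤ S.length) ∧
  ∀ i j : ℕ, 1 ≤ i → i ≤ j → j ≤ S.length →
    ∃ i' j' : ℕ, 1 ≤ i' ∧ i' ≤ j' ∧ j' ≤ S.length ∧
      (S.drop (i' - 1)).take (j' - i' + 1) = (S.drop (i - 1)).take (j - i + 1) ∧
      ∃ p ∈ Γ, i' ≤ p ∧ p ≤ j'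

/-- `γ(S)`: the minimum size of an attractor of `S`. -/
noncomputable def gamma {α : Type} (S : List α) : ℕ :=
  sInf { m | ∃ Γ : Finset ℕ, IsAttractor S Γ ∧ Γ.card = m }

/-!
For `k < ⌊log₂ n⌋` the substring `S_n[2^k .. 2^(k+1)] = b a^(2^k - 1) b` occurs only once in
`S_n`, because its two `b`s sit at powers of two `2^s` and `2^s + 2^k`, which forces `s = k`.
Hence every attractor meets each of the `⌊log₂ n⌋` intervals `[2^k, 2^(k+1)]`, and since a
position lies in at most two of them, it has at least `⌊log₂ n⌋ / 2` elements.
-/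

open Finset

theorem isAttractor_Icc_one_length {α : Type} (S : List α) :
    IsAttractor S (Icc 1 S.length) := by
  refine ⟨fun p hp => mem_Icc.mp hp, fun i j hi hij hj => ?_⟩
  exact ⟨i, j, hi, hij, hj, rfl, i, mem_Icc.mpr ⟨hi, hij.trans hj⟩, le_rfl, hij⟩

theorem exists_isAttractor_card_eq_gamma {α : Type} (S : List α) :
    ∃ Γ, IsAttractor S Γ ∧ Γ.card = gamma S :=
  Nat.sInf_mem (s := {m | ∃ Γ : Finset ℕ, IsAttractor S Γ ∧ Γ.card = m})
    ⟨_, _, isAttractor_Icc_one_length S, rfl⟩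

theorem eq_of_two_pow_add_two_pow_eq_two_pow {s k t : ℕ} (h : 2 ^ s + 2 ^ k = 2 ^ t) :
    s = k := by
  wlog hsk : s ≤ k generalizing s k
  · exact (this (by omega) (by omega)).symm
  by_contra hne
  have hlt : 2 ^ s < 2 ^ k := Nat.pow_lt_pow_right (by norm_num) (by omega)
  have hpos : 0 < 2 ^ s := by positivity
  have hkt : k < t := (Nat.pow_lt_pow_iff_right (a := 2) (by norm_num)).mp (by omega)
  have htk : t < k + 1 :=
    (Nat.pow_lt_pow_iff_right (a := 2) (by norm_num)).mp (by rw [pow_succ]; omega)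
  omega

theorem log_two_mem_Icc_of_mem_Icc_two_pow {k p : ℕ} (hp : p ∈ Icc (2 ^ k) (2 ^ (k + 1))) :
    Nat.log 2 p ∈ Icc k (k + 1) := by
  obtain ⟨hlo, hhi⟩ := mem_Icc.mp hp
  refine mem_Icc.mpr ⟨Nat.le_log_of_pow_le (by norm_num) hlo, ?_⟩
  simpa [Nat.log_pow] using Nat.log_mono_right (b := 2) hhi

theorem le_two_mul_card_of_forall_exists_mem_Icc_two_pow {Γ : Finset ℕ} {L : ℕ}
    (h : ∀ k < L, ∃ p ∈ Γ, p ∈ Icc (2 ^ k) (2 ^ (k + 1))) : L ≤ 2 * Γ.card := by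
  choose! f hfΓ hf using h
  have hfiber : ∀ p ∈ Γ, #{k ∈ range L | f k = p} ≤ 2 := by
    intro p _
    calc #{k ∈ range L | f k = p}
        ≤ #(Icc (Nat.log 2 p - 1) (Nat.log 2 p)) := by
          refine card_le_card fun k hk => ?_
          obtain ⟨hkL, rfl⟩ := mem_filter.mp hk
          have := mem_Icc.mp (log_two_mem_Icc_of_mem_Icc_two_pow (hf k (mem_range.mp hkL)))
          exact mem_Icc.mpr (by omega)
      _ ≤ 2 := by simp only [Nat.card_Icc]; omega
  simpa using card_le_mul_card_image_of_maps_to (fun k hk => hfΓ k (mem_range.mp hk)) 2 hfiber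

theorem Sn_length (n : ℕ) : (Sn n).length = n := by simp [Sn]

theorem Sn_getElem?_eq_some_true_iff {n i : ℕ} (h : i < n) :
    (Sn n)[i]? = some true ↔ ∃ j, i + 1 = 2 ^ j := by
  rw [List.getElem?_eq_getElem (by rwa [Sn_length])]
  simp only [Sn, List.getElem_map, List.getElem_range, Option.some_inj, List.any_eq_true,
    List.mem_range, beq_iff_eq]
  exact ⟨fun ⟨j, _, hj⟩ => ⟨j, hj⟩,
    fun ⟨j, hj⟩ => ⟨j, by have := Nat.lt_two_pow_self (n := j); omega, hj⟩⟩

theorem eq_two_pow_of_Sn_occurrence {n k i j : ℕ} (hkn : 2 ^ (k + 1) ≤ n) (hi : 1 ≤ i)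
    (hj : j ≤ n) (heq : ((Sn n).drop (i - 1)).take (j - i + 1)
      = ((Sn n).drop (2 ^ k - 1)).take (2 ^ (k + 1) - 2 ^ k + 1)) :
    i = 2 ^ k ∧ j = 2 ^ (k + 1) := by
  have hk : 1 ≤ 2 ^ k := Nat.one_le_two_pow
  have hlen := congrArg List.length heq
  simp only [List.length_take, List.length_drop, Sn_length] at hlen
  have hji : j = i + 2 ^ k := by omega
  have hat (d : ℕ) (hd : d ≤ 2 ^ k) : (Sn n)[i - 1 + d]? = (Sn n)[2 ^ k - 1 + d]? := by
    simpa [List.getElem?_take, List.getElem?_drop, show d < j - i + 1 by omega,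
      show d < 2 ^ (k + 1) - 2 ^ k + 1 by omega] using congrArg (·[d]?) heq
  have hcopy (d : ℕ) (hd : d ≤ 2 ^ k) (hpat : ∃ e, 2 ^ k + d = 2 ^ e) :
      ∃ e, i + d = 2 ^ e := by
    obtain ⟨e, he⟩ := hpat
    have htrue : (Sn n)[2 ^ k - 1 + d]? = some true :=
      (Sn_getElem?_eq_some_true_iff (by omega)).mpr ⟨e, by omega⟩
    obtain ⟨e', he'⟩ := (Sn_getElem?_eq_some_true_iff (by omega)).mp ((hat d hd).trans htrue)
    exact ⟨e', by omega⟩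
  obtain ⟨s, hs⟩ := hcopy 0 (Nat.zero_le _) ⟨k, rfl⟩
  obtain ⟨t, ht⟩ := hcopy (2 ^ k) le_rfl ⟨k + 1, by omega⟩
  obtain rfl : s = k := eq_of_two_pow_add_two_pow_eq_two_pow (t := t) (by omega)
  omega

theorem IsAttractor.exists_mem_Icc_two_pow {n k : ℕ} {Γ : Finset ℕ}
    (hΓ : IsAttractor (Sn n) Γ) (hkn : 2 ^ (k + 1) ≤ n) :
    ∃ p ∈ Γ, p ∈ Icc (2 ^ k) (2 ^ (k + 1)) := by
  obtain ⟨i, j, hi, -, hj, heq, p, hp, hip, hpj⟩ := hΓ.2 (2 ^ k) (2 ^ (k + 1))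
    Nat.one_le_two_pow (Nat.pow_le_pow_right (by norm_num) (by omega)) (by rwa [Sn_length])
  obtain ⟨rfl, rfl⟩ := eq_two_pow_of_Sn_occurrence hkn hi (by rwa [Sn_length] at hj) heq
  exact ⟨p, hp, mem_Icc.mpr ⟨hip, hpj⟩⟩

theorem gamma_Sn_ge_general (n : ℕ) :
    (∀ Γ : Finset ℕ, IsAttractor (Sn n) Γ → ((Nat.log 2 n : ℚ) / 2) ≤ Γ.card) ∧
    ((Nat.log 2 n : ℚ) / 2) ≤ gamma (Sn n) := by
  have hbound (Γ : Finset ℕ) (hΓ : IsAttractor (Sn n) Γ) :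
      ((Nat.log 2 n : ℚ) / 2) ≤ Γ.card := by
    have hlog := le_two_mul_card_of_forall_exists_mem_Icc_two_pow (Γ := Γ) (L := Nat.log 2 n)
      fun k hk => hΓ.exists_mem_Icc_two_pow
        (Nat.pow_le_of_le_log (by rintro rfl; simp at hk) hk)
    rw [div_le_iff₀ two_pos]
    exact_mod_cast (mul_comm 2 Γ.card) ▸ hlog
  obtain ⟨Γ, hΓ, hcard⟩ := exists_isAttractor_card_eq_gamma (Sn n)
  exact ⟨hbound, hcard ▸ hbound Γ hΓ⟩

/-- For every `n ≥ 1`, every attractor of `S_n` has size at least `⌊log₂ n⌋ / 2`;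
that is, `γ(S_n) ≥ ⌊log₂ n⌋ / 2`. -/
theorem gamma_Sn_ge (n : ℕ) (hn : 1 ≤ n) :
    (∀ Γ : Finset ℕ, IsAttractor (Sn n) Γ → ((Nat.log 2 n : ℚ) / 2) ≤ Γ.card) ∧
    ((Nat.log 2 n : ℚ) / 2) ≤ gamma (Sn n) :=
  gamma_Sn_ge_general n
end

section
/- There exists a constant c > 0 such that for every integer n ≥ 2 and every integer δ with 2 ≤ δ ≤ n, there exists a string S of length n over some finite alphabet with δ(S) = δ and γ(S) ≥ c·δ·log₂(2n/δ). -/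
/-!
Write `d = 2s + m` with `s ≈ d / 3`. The witness starts with `m` letters occurring once,
followed by `s` blocks; block `j` is written with `2j` and `2j + 1`, the latter at the offsets
`sepPos r = ∑_{i<r} (8^i + 1)`, `r < t`, so the runs of `2j` between them have lengths `8^r`.
Since `2 * sepPos r < sepPos r'` for `r < r'`, a window of length `k` either contains at most
one separator, and is one of `s (k + 1)` words, or starts in the prefix, among the first `k - 1`
positions of a block, or less than `k` positions before the next block. Hence `d_k ≤ d k` and
`δ = d_1 = d`. An attractor needs a position for each of the `d` letters and one inside each
window `2j+1 (2j)^(8^r) 2j+1`, which occurs only once since the gap lengths are distinct; for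
even `r` these windows are disjoint, so `γ ≥ max d (s ⌊t/2⌋)`. Taking `t` maximal for the
length `n` gives `n < d 8^(t+1)`.
-/
lemma card_le_card_of_pairwiseDisjoint {ι β : Type*} {I : Finset ι} {Γ : Finset β}
    {A : ι → Set β} (hA : (I : Set ι).PairwiseDisjoint A)
    (hΓ : ∀ i ∈ I, ∃ p ∈ Γ, p ∈ A i) : I.card ≤ Γ.card := by
  classical
  calc I.card ≤ (I.biUnion fun i => Γ.filter (· ∈ A i)).card :=
        Finset.card_le_card_biUnion
          (fun i hi j hj hij => Finset.disjoint_left.2 fun p hpi hpj =>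
            Set.disjoint_left.1 (hA hi hj hij) (Finset.mem_filter.1 hpi).2
              (Finset.mem_filter.1 hpj).2)
          (fun i hi => by simpa [Finset.Nonempty] using hΓ i hi)
    _ ≤ Γ.card :=
        Finset.card_le_card (Finset.biUnion_subset.2 fun _ _ => Finset.filter_subset _ _)

lemma exists_bracket_of_monotone {f : ℕ → ℕ} (hf : Monotone f) {a n : ℕ} (ha : f a ≤ n)
    (hn : ∃ u, n < f u) : ∃ t, a ≤ t ∧ f t ≤ n ∧ n < f (t + 1) := by
  classical
  have hspec := Nat.find_spec hn
  have ha' : a < Nat.find hn := by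
    by_contra! h
    exact absurd ((hf h).trans ha) (not_le.2 hspec)
  refine ⟨Nat.find hn - 1, by omega, not_lt.1 (Nat.find_min hn (by omega)), ?_⟩
  rwa [Nat.sub_add_cancel (by omega)]

lemma logb_two_mul_div_le {n d t : ℕ} (hn : 0 < n) (hd : 0 < d) (h : n < d * 8 ^ (t + 1)) :
    Real.logb 2 (2 * n / d) ≤ 3 * t + 4 := by
  rw [Real.logb_le_iff_le_rpow one_lt_two (by positivity), div_le_iff₀ (by positivity)]
  have : (2 : ℝ) ^ ((3 * t + 4 : ℕ) : ℝ) = 2 * 8 ^ (t + 1) := by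
    rw [Real.rpow_natCast, show 3 * t + 4 = 3 * (t + 1) + 1 by ring, pow_succ, pow_mul]
    norm_num [mul_comm]
  push_cast at this
  rw [this]
  have : (n : ℝ) ≤ d * 8 ^ (t + 1) := by exact_mod_cast h.le
  nlinarith

section Strings

variable {α : Type}

lemma take_drop_map_range (f : ℕ → α) {n q k : ℕ} (h : q + k ≤ n) :
    (((List.range n).map f).drop q).take k = (List.range k).map (fun x => f (q + x)) :=
  List.ext_getElem (by simp; omega) (by simp)

lemma exists_of_mem_substrings_map_range [DecidableEq α] {f : ℕ → α} {n k : ℕ} {u : List α}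
    (hu : u ∈ substrings ((List.range n).map f) k) :
    ∃ q, q + k ≤ n ∧ u = (List.range k).map (fun x => f (q + x)) := by
  obtain ⟨⟨q, hqn, rfl⟩, hlen⟩ := by
    simpa only [substrings, Finset.mem_filter, Finset.mem_image] using hu
  have hq : q + k ≤ n := by
    simp only [List.length_take, List.length_drop, List.length_map, List.length_range] at hlen
    simp only [Finset.mem_range, List.length_map, List.length_range] at hqn
    omega
  exact ⟨q, hq, take_drop_map_range f hq⟩

lemma subCount_one [DecidableEq α] (S : List α) : subCount S 1 = S.toFinset.card := by
  have : substrings S 1 = S.toFinset.image fun a => [a] := by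
    ext u
    simp only [substrings, Finset.mem_filter, Finset.mem_image, Finset.mem_range,
      List.mem_toFinset]
    constructor
    · rintro ⟨⟨i, hi, rfl⟩, hlen⟩
      have hi : i < S.length := by simp at hlen; omega
      exact ⟨S[i], List.getElem_mem hi, by simp [List.take_one_drop_eq_of_lt_length hi]⟩
    · rintro ⟨a, ha, rfl⟩
      obtain ⟨i, hi, rfl⟩ := List.getElem_of_mem ha
      exact ⟨⟨i, by omega, by simp [List.take_one_drop_eq_of_lt_length hi]⟩, rfl⟩
  rw [subCount, this, Finset.card_image_of_injective _ fun a b h => List.singleton_inj.1 h]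

lemma delta_eq_of_subCount_le [DecidableEq α] {S : List α} {d : ℕ} (hS : S ≠ [])
    (h1 : subCount S 1 = d) (hle : ∀ k, 1 ≤ k → subCount S k ≤ d * k) : delta S = d := by
  have hlen : 1 ∈ Finset.Icc 1 S.length :=
    Finset.mem_Icc.2 ⟨le_rfl, List.length_pos_iff.2 hS⟩
  rw [delta, dif_neg hS]
  refine le_antisymm (Finset.sup'_le _ _ fun k hk => ?_) ?_
  · have hk : 1 ≤ k := (Finset.mem_Icc.1 hk).1
    rw [div_le_iff₀ (by exact_mod_cast hk)]
    exact_mod_cast hle k hk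
  · calc (d : ℚ) = (subCount S 1 : ℚ) / (1 : ℕ) := by simp [h1]
      _ ≤ _ := Finset.le_sup' (fun k => (subCount S k : ℚ) / k) hlen

end Strings

section Attractors

variable {α : Type} {S : List α} {Γ : Finset ℕ}

lemma isAttractor_Icc (S : List α) : IsAttractor S (Finset.Icc 1 S.length) :=
  ⟨fun _ hp => Finset.mem_Icc.1 hp, fun i j hi hij hj =>
    ⟨i, j, hi, hij, hj, rfl, i, Finset.mem_Icc.2 ⟨hi, hij.trans hj⟩, le_rfl, hij⟩⟩

lemma le_gamma {b : ℕ} (h : ∀ Γ, IsAttractor S Γ → b ≤ Γ.card) : b ≤ gamma S := by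
  obtain ⟨Γ, hΓ, hcard⟩ :=
    Nat.sInf_mem (s := {m | ∃ Γ : Finset ℕ, IsAttractor S Γ ∧ Γ.card = m})
      ⟨_, _, isAttractor_Icc S, rfl⟩
  rw [gamma, ← hcard]
  exact h Γ hΓ

/-- Start positions `q`, `q'` are 0-based, attractor positions `p` are 1-based. -/
lemma IsAttractor.exists_occurrence (hΓ : IsAttractor S Γ) {q ℓ : ℕ} (hℓ : 0 < ℓ)
    (h : q + ℓ ≤ S.length) :
    ∃ q', q' + ℓ ≤ S.length ∧ (S.drop q').take ℓ = (S.drop q).take ℓ ∧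
      ∃ p ∈ Γ, p ∈ Set.Ioc q' (q' + ℓ) := by
  obtain ⟨i', j', hi', hij', hj', heq, p, hp, hpi, hpj⟩ :=
    hΓ.2 (q + 1) (q + ℓ) (by omega) (by omega) h
  have hlen := congrArg List.length heq
  simp only [List.length_take, List.length_drop] at hlen
  rw [show q + ℓ - (q + 1) + 1 = ℓ by omega, Nat.add_sub_cancel] at heq hlen
  rw [show j' - i' + 1 = ℓ by omega] at heq
  exact ⟨i' - 1, by omega, heq, p, hp, by simp only [Set.mem_Ioc]; omega⟩

lemma IsAttractor.exists_mem_Ioc_of_unique (hΓ : IsAttractor S Γ) {q ℓ : ℕ} (hℓ : 0 < ℓ)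
    (h : q + ℓ ≤ S.length)
    (huniq : ∀ q', q' + ℓ ≤ S.length →
      (S.drop q').take ℓ = (S.drop q).take ℓ → q' = q) :
    ∃ p ∈ Γ, p ∈ Set.Ioc q (q + ℓ) := by
  obtain ⟨q', hq', heq, hp⟩ := hΓ.exists_occurrence hℓ h
  exact huniq q' hq' heq ▸ hp

lemma IsAttractor.card_toFinset_le [DecidableEq α] (hΓ : IsAttractor S Γ) :
    S.toFinset.card ≤ Γ.card := by
  refine card_le_card_of_pairwiseDisjoint (A := fun a => {p | S[p - 1]? = some a})
    (fun a _ b _ hab => Set.disjoint_left.2 fun p ha hb => hab (Option.some_injective _ ?_)) ?_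
  · exact (ha : S[p - 1]? = a).symm.trans hb
  · intro a ha
    obtain ⟨q, hq, rfl⟩ := List.getElem_of_mem (List.mem_toFinset.1 ha)
    obtain ⟨q', -, heq, p, hp, hpq⟩ := hΓ.exists_occurrence (q := q) one_pos (by omega)
    have := congrArg (·[0]?) heq
    simp only [List.getElem?_take, List.getElem?_drop] at this
    exact ⟨p, hp, by simp at hpq ⊢; rw [show p - 1 = q' by omega]; simpa [hq] using this⟩

end Attractors

namespace BlockWord

def sepPos : ℕ → ℕ
  | 0 => 0
  | r + 1 => sepPos r + 8 ^ r + 1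

lemma sepPos_succ (r : ℕ) : sepPos (r + 1) = sepPos r + 8 ^ r + 1 := rfl

lemma sepPos_strictMono : StrictMono sepPos :=
  strictMono_nat_of_lt_succ fun r => by
    have := Nat.one_le_pow r 8 (by norm_num)
    rw [sepPos_succ]; omega

lemma sepPos_le_pow (r : ℕ) : sepPos r ≤ 8 ^ r := by
  induction r with
  | zero => exact Nat.zero_le _
  | succ r ih => rw [sepPos_succ, pow_succ]; linarith [Nat.one_le_pow r 8 (by norm_num)]

lemma two_le_sepPos {t : ℕ} (ht : 0 < t) : 2 ≤ sepPos t :=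
  sepPos_strictMono.monotone (show 1 ≤ t from ht)

lemma two_mul_sepPos_lt {r r' : ℕ} (h : r < r') : 2 * sepPos r < sepPos r' :=
  calc 2 * sepPos r < sepPos (r + 1) := by rw [sepPos_succ]; linarith [sepPos_le_pow r]
    _ ≤ sepPos r' := sepPos_strictMono.monotone h

def blockStart (m t j : ℕ) : ℕ := m + j * sepPos t

lemma blockStart_succ (m t j : ℕ) : blockStart m t (j + 1) = blockStart m t j + sepPos t := by
  simp only [blockStart]; ring

lemma blockStart_mono (m t : ℕ) : Monotone (blockStart m t) :=
  fun _ _ h => Nat.add_le_add_left (Nat.mul_le_mul_right _ h) m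

lemma blockStart_le_mul_pow (m t s : ℕ) : blockStart m t s ≤ (2 * s + m) * 8 ^ t := by
  have := sepPos_le_pow t
  have := Nat.one_le_pow t 8 (by norm_num)
  simp only [blockStart]; nlinarith

def blockLetter (t j z : ℕ) : ℕ :=
  if z ∈ (Finset.range t).image sepPos then 2 * j + 1 else 2 * j

lemma blockLetter_sepPos {t r : ℕ} (j : ℕ) (hr : r < t) :
    blockLetter t j (sepPos r) = 2 * j + 1 :=
  if_pos (Finset.mem_image_of_mem _ (Finset.mem_range.2 hr))

lemma blockLetter_of_between {t r z : ℕ} (j : ℕ) (h₁ : sepPos r < z)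
    (h₂ : z < sepPos (r + 1)) : blockLetter t j z = 2 * j := by
  refine if_neg fun hz => ?_
  obtain ⟨w, -, rfl⟩ := Finset.mem_image.1 hz
  have := sepPos_strictMono.lt_iff_lt.1 h₁
  have := sepPos_strictMono.lt_iff_lt.1 h₂
  omega

lemma exists_sepPos_of_blockLetter_eq {t j j' z : ℕ} (h : blockLetter t j z = 2 * j' + 1) :
    j = j' ∧ ∃ r < t, z = sepPos r := by
  unfold blockLetter at h
  split_ifs at h with hz
  · obtain ⟨r, hr, rfl⟩ := Finset.mem_image.1 hz
    exact ⟨by omega, r, Finset.mem_range.1 hr, rfl⟩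
  · omega

def blockIndex (s m t x : ℕ) : ℕ := min ((x - m) / sepPos t) (s - 1)

/-- The last block, `j = s - 1`, continues with `2j` forever, which pads the word to any length
`n ≥ blockStart m t s`. -/
def letter (s m t x : ℕ) : ℕ :=
  if x < m then 2 * s + x
  else blockLetter t (blockIndex s m t x) (x - blockStart m t (blockIndex s m t x))

def word (s m t n : ℕ) : List ℕ := (List.range n).map (letter s m t)

variable {s m t : ℕ}

lemma letter_of_lt {x : ℕ} (hx : x < m) : letter s m t x = 2 * s + x := if_pos hx

lemma letter_blockStart_add (ht : 0 < t) {j z : ℕ} (hj : j < s)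
    (hz : z < sepPos t ∨ j = s - 1) :
    letter s m t (blockStart m t j + z) = blockLetter t j z := by
  have hQ := two_le_sepPos ht
  have hx : blockStart m t j + z - m = j * sepPos t + z := by simp only [blockStart]; omega
  have hidx : blockIndex s m t (blockStart m t j + z) = j := by
    have hdiv : j ≤ (j * sepPos t + z) / sepPos t :=
      (Nat.le_div_iff_mul_le (by omega)).2 (Nat.le_add_right _ _)
    rw [blockIndex, hx]
    rcases hz with hz | rfl
    · have : (j * sepPos t + z) / sepPos t < j + 1 :=
        (Nat.div_lt_iff_lt_mul (by omega)).2 (by rw [add_mul]; omega)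
      omega
    · omega
  rw [letter, if_neg (by simp only [blockStart]; omega), hidx, Nat.add_sub_cancel_left]

lemma exists_eq_blockStart_add (ht : 0 < t) (hs : 0 < s) {x : ℕ} (hx : m ≤ x) :
    ∃ j < s, ∃ z, x = blockStart m t j + z ∧ (z < sepPos t ∨ j = s - 1) := by
  have hQ := two_le_sepPos ht
  have hjx : blockIndex s m t x * sepPos t ≤ x - m :=
    (Nat.mul_le_mul_right _ (min_le_left _ _)).trans (Nat.div_mul_le_self _ _)
  refine ⟨blockIndex s m t x, by simp only [blockIndex]; omega,
    x - blockStart m t (blockIndex s m t x), by simp only [blockStart]; omega, ?_⟩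
  by_cases hj : blockIndex s m t x = s - 1
  · exact Or.inr hj
  · have hidx : blockIndex s m t x = (x - m) / sepPos t := by
      simp only [blockIndex] at hj ⊢; omega
    have := Nat.lt_div_mul_add (a := x - m) (show 0 < sepPos t by omega)
    rw [← hidx] at this
    simp only [blockStart]
    omega

lemma letter_lt (ht : 0 < t) (hs : 0 < s) (x : ℕ) : letter s m t x < 2 * s + m := by
  rcases lt_or_ge x m with hx | hx
  · rw [letter_of_lt hx]; omega
  · obtain ⟨j, hj, z, rfl, hz⟩ := exists_eq_blockStart_add ht hs hx
    rw [letter_blockStart_add ht hj hz, blockLetter]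
    split_ifs <;> omega

lemma letter_blockStart_add_sepPos (ht : 0 < t) {j r : ℕ} (hj : j < s) (hr : r < t) :
    letter s m t (blockStart m t j + sepPos r) = 2 * j + 1 := by
  rw [letter_blockStart_add ht hj (Or.inl (sepPos_strictMono hr)), blockLetter_sepPos j hr]

lemma letter_blockStart_add_of_between (ht : 0 < t) {j r z : ℕ} (hj : j < s) (hr : r < t)
    (h₁ : sepPos r < z) (h₂ : z < sepPos (r + 1)) :
    letter s m t (blockStart m t j + z) = 2 * j := by
  have := sepPos_strictMono.monotone (show r + 1 ≤ t from hr)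
  rw [letter_blockStart_add ht hj (Or.inl (by omega)), blockLetter_of_between j h₁ h₂]

lemma exists_letter_eq (ht : 0 < t) {c : ℕ} (hc : c < 2 * s + m) :
    ∃ x < blockStart m t s, letter s m t x = c := by
  have hQ := two_le_sepPos ht
  rcases lt_or_ge c (2 * s) with hc' | hc'
  · obtain ⟨j, rfl | rfl⟩ := Nat.even_or_odd' c
    · refine ⟨blockStart m t j + 1, ?_, ?_⟩
      · have := blockStart_mono m t (show j + 1 ≤ s by omega)
        rw [blockStart_succ] at this; omega
      · exact letter_blockStart_add_of_between ht (by omega) ht (r := 0) (by simp [sepPos])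
          (by simp [sepPos])
    · refine ⟨blockStart m t j, ?_, ?_⟩
      · have := blockStart_mono m t (show j + 1 ≤ s by omega)
        rw [blockStart_succ] at this; omega
      · simpa [sepPos] using letter_blockStart_add_sepPos (m := m) ht (show j < s by omega) ht
  · exact ⟨c - 2 * s, by simp only [blockStart]; omega, by rw [letter_of_lt (by omega)]; omega⟩

lemma exists_sepPos_of_letter_eq (ht : 0 < t) {j x : ℕ} (hj : j < s)
    (h : letter s m t x = 2 * j + 1) : ∃ r < t, x = blockStart m t j + sepPos r := by
  rcases lt_or_ge x m with hx | hx
  · rw [letter_of_lt hx] at h; omega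
  · obtain ⟨j', hj', z, rfl, hz⟩ := exists_eq_blockStart_add ht (by omega : 0 < s) hx
    rw [letter_blockStart_add ht hj' hz] at h
    obtain ⟨rfl, r, hr, rfl⟩ := exists_sepPos_of_blockLetter_eq h
    exact ⟨r, hr, rfl⟩

@[simp] lemma length_word (s m t n : ℕ) : (word s m t n).length = n := by simp [word]

lemma toFinset_word (ht : 0 < t) (hs : 0 < s) {n : ℕ} (hn : blockStart m t s ≤ n) :
    (word s m t n).toFinset = Finset.range (2 * s + m) := by
  ext c
  simp only [word, List.mem_toFinset, List.mem_map, List.mem_range, Finset.mem_range]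
  constructor
  · rintro ⟨x, -, rfl⟩
    exact letter_lt ht hs x
  · intro hc
    obtain ⟨x, hx, rfl⟩ := exists_letter_eq ht hc
    exact ⟨x, by omega, rfl⟩

def oneSepWord (k j p : ℕ) : List ℕ :=
  (List.range k).map fun x => if x = p then 2 * j + 1 else 2 * j

lemma exists_oneSepWord_eq (t j : ℕ) {k z : ℕ} (hk : k ≤ z + 1) :
    ∃ p ≤ k, (List.range k).map (fun x => blockLetter t j (z + x)) = oneSepWord k j p := by
  by_cases h : ∃ p < k, blockLetter t j (z + p) = 2 * j + 1
  · obtain ⟨p, hp, hsep⟩ := h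
    obtain ⟨-, r, -, hr⟩ := exists_sepPos_of_blockLetter_eq hsep
    refine ⟨p, hp.le, List.map_congr_left fun x hx => ?_⟩
    rw [List.mem_range] at hx
    split_ifs with hxp
    · rw [hxp, hsep]
    · unfold blockLetter
      refine if_neg fun hmem => hxp ?_
      obtain ⟨r', -, hr'⟩ := Finset.mem_image.1 hmem
      rcases lt_trichotomy r r' with hlt | rfl | hlt
      · have := two_mul_sepPos_lt hlt; omega
      · omega
      · have := two_mul_sepPos_lt hlt; omega
  · push Not at h
    refine ⟨k, le_rfl, List.map_congr_left fun x hx => ?_⟩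
    rw [List.mem_range] at hx
    rw [if_neg hx.ne]
    have := h x hx
    unfold blockLetter at this ⊢
    split_ifs at this ⊢ <;> omega

def pinned (s m t k : ℕ) : Finset ℕ :=
  Finset.range m
    ∪ (Finset.range s).biUnion (fun j => Finset.Ico (blockStart m t j) (blockStart m t j + k - 1))
    ∪ (Finset.range (s - 1)).biUnion
        (fun j => Finset.Ico (blockStart m t (j + 1) + 1 - k) (blockStart m t (j + 1)))

lemma card_pinned_le (s m t k : ℕ) :
    (pinned s m t k).card ≤ m + s * (k - 1) + (s - 1) * (k - 1) := by
  refine (Finset.card_union_le _ _).trans (add_le_add ((Finset.card_union_le _ _).trans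
    (add_le_add (Finset.card_range m).le ?_)) ?_)
  all_goals exact (Finset.card_biUnion_le_card_mul _ _ (k - 1) fun j _ => by
    rw [Nat.card_Ico]; omega).trans_eq (by rw [Finset.card_range])

lemma substrings_word_subset (ht : 0 < t) (hs : 0 < s) (n k : ℕ) :
    substrings (word s m t n) k ⊆
      (Finset.range s ×ˢ Finset.range (k + 1)).image (fun jp => oneSepWord k jp.1 jp.2)
        ∪ (pinned s m t k).image (fun q => (List.range k).map fun x => letter s m t (q + x)) := by
  intro u hu
  obtain ⟨q, -, rfl⟩ := exists_of_mem_substrings_map_range hu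
  rw [Finset.mem_union]
  by_cases hpin : q ∈ pinned s m t k
  · exact Or.inr (Finset.mem_image_of_mem _ hpin)
  left
  simp only [pinned, Finset.mem_union, Finset.mem_range, Finset.mem_biUnion, Finset.mem_Ico,
    not_or, not_exists, not_and] at hpin
  obtain ⟨⟨hqm, hstart⟩, hcross⟩ := hpin
  obtain ⟨j, hj, z, rfl, hz⟩ := exists_eq_blockStart_add ht hs (not_lt.1 hqm)
  have hblock : (List.range k).map (fun x => letter s m t (blockStart m t j + z + x)) =
      (List.range k).map (fun x => blockLetter t j (z + x)) := by
    refine List.map_congr_left fun x hx => ?_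
    rw [add_assoc]
    refine letter_blockStart_add ht hj ?_
    by_contra! hout
    have := hcross j (by omega)
    rw [blockStart_succ] at this
    simp only [List.mem_range] at hx
    omega
  obtain ⟨p, hp, hword⟩ := exists_oneSepWord_eq t j (k := k) (z := z) (by
    have := hstart j hj
    omega)
  exact Finset.mem_image.2 ⟨(j, p), by simp only [Finset.mem_product, Finset.mem_range]; omega,
    by rw [hblock, hword]⟩

lemma subCount_word_le (ht : 0 < t) (hs : 0 < s) (hsm : s ≤ m + 1) (n : ℕ) {k : ℕ}
    (hk : 0 < k) : subCount (word s m t n) k ≤ (2 * s + m) * k := by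
  calc subCount (word s m t n) k ≤ s * (k + 1) + (m + s * (k - 1) + (s - 1) * (k - 1)) :=
        (Finset.card_le_card (substrings_word_subset ht hs n k)).trans <|
          (Finset.card_union_le _ _).trans <| add_le_add
            (Finset.card_image_le.trans (by simp))
            (Finset.card_image_le.trans (card_pinned_le s m t k))
    _ ≤ (2 * s + m) * k := by
        obtain ⟨k, rfl⟩ := Nat.exists_eq_add_of_lt hk
        obtain ⟨s, rfl⟩ := Nat.exists_eq_add_of_lt hs
        simp only [zero_add, Nat.add_sub_cancel]
        nlinarith


lemma eq_of_letter_window_eq (ht : 0 < t) {j r q : ℕ} (hj : j < s) (hr : r + 1 < t)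
    (h : ∀ x < 8 ^ r + 2, letter s m t (q + x) = letter s m t (blockStart m t j + sepPos r + x)) :
    q = blockStart m t j + sepPos r := by
  have hr₁ := sepPos_succ r
  have h8r : 0 < 8 ^ r := by positivity
  have h₀ : letter s m t q = 2 * j + 1 := by
    simpa using (h 0 (by positivity)).trans (letter_blockStart_add_sepPos ht hj (by omega))
  have h₁ : letter s m t (q + (8 ^ r + 1)) = 2 * j + 1 := by
    rw [h _ (by omega), show blockStart m t j + sepPos r + (8 ^ r + 1) =
      blockStart m t j + sepPos (r + 1) by omega]
    exact letter_blockStart_add_sepPos ht hj hr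
  obtain ⟨u, hu, rfl⟩ := exists_sepPos_of_letter_eq ht hj h₀
  obtain ⟨v, hv, hqv⟩ := exists_sepPos_of_letter_eq ht hj h₁
  have huv : u < v := sepPos_strictMono.lt_iff_lt.1 (by omega)
  have hu₁ := sepPos_succ u
  have h8u : 0 < 8 ^ u := by positivity
  have hpow : 8 ^ u = 8 ^ r := by
    rcases lt_trichotomy (8 ^ u) (8 ^ r) with hlt | heq | hgt
    · have hsep := h (8 ^ u + 1) (by omega)
      rw [show blockStart m t j + sepPos u + (8 ^ u + 1) = blockStart m t j + sepPos (u + 1) by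
          omega, letter_blockStart_add_sepPos ht hj (by omega), add_assoc,
        letter_blockStart_add_of_between ht hj (by omega : r < t) (by omega) (by omega)] at hsep
      omega
    · exact heq
    · have := sepPos_strictMono.monotone (show u + 1 ≤ v by omega)
      omega
  rw [Nat.pow_right_injective (by norm_num : 2 ≤ 8) hpow]

/-- The 1-based positions of the window `2j+1, 2j, …, 2j, 2j+1` spanning the `r`-th gap of
block `j`. -/
def gapWindow (m t j r : ℕ) : Set ℕ :=
  Set.Ioc (blockStart m t j + sepPos r) (blockStart m t j + sepPos r + (8 ^ r + 2))

lemma exists_mem_gapWindow_of_isAttractor (ht : 0 < t) {n : ℕ} (hn : blockStart m t s ≤ n)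
    {Γ : Finset ℕ} (hΓ : IsAttractor (word s m t n) Γ) {j r : ℕ} (hj : j < s)
    (hr : r + 1 < t) : ∃ p ∈ Γ, p ∈ gapWindow m t j r := by
  have hfit : blockStart m t j + sepPos r + (8 ^ r + 2) ≤ n := by
    have := blockStart_mono m t (show j + 1 ≤ s from hj)
    have := sepPos_strictMono (show r + 1 < t from hr)
    rw [blockStart_succ] at *
    rw [sepPos_succ] at *
    omega
  refine hΓ.exists_mem_Ioc_of_unique (by positivity) (by rwa [length_word]) fun q hq heq => ?_
  rw [length_word] at hq
  rw [word, take_drop_map_range _ hq, take_drop_map_range _ hfit, List.map_inj_left] at heq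
  exact eq_of_letter_window_eq ht hj hr fun x hx => heq x (List.mem_range.2 hx)

lemma lt_of_mem_gapWindow {j j' e e' p p' : ℕ} (he : 2 * e + 2 ≤ t)
    (hlt : j < j' ∨ j = j' ∧ e < e') (hp : p ∈ gapWindow m t j (2 * e))
    (hp' : p' ∈ gapWindow m t j' (2 * e')) : p < p' := by
  have hgap : blockStart m t j + sepPos (2 * e) + (8 ^ (2 * e) + 2) <
      blockStart m t j + sepPos (2 * e + 2) := by
    have : 0 < 8 ^ (2 * e + 1) := by positivity
    rw [show 2 * e + 2 = 2 * e + 1 + 1 from rfl, sepPos_succ, sepPos_succ]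
    omega
  simp only [gapWindow, Set.mem_Ioc] at hp hp'
  rcases hlt with hlt | ⟨rfl, hlt⟩
  · have := sepPos_strictMono.monotone he
    have := blockStart_mono m t (show j + 1 ≤ j' from hlt)
    rw [blockStart_succ] at this
    omega
  · have := sepPos_strictMono.monotone (show 2 * e + 2 ≤ 2 * e' by omega)
    omega

lemma disjoint_gapWindow {j j' e e' : ℕ} (he : 2 * e + 2 ≤ t) (he' : 2 * e' + 2 ≤ t)
    (hne : (j, e) ≠ (j', e')) :
    Disjoint (gapWindow m t j (2 * e)) (gapWindow m t j' (2 * e')) := by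
  refine Set.disjoint_left.2 fun p hp hp' => ?_
  rcases lt_trichotomy j j' with hj | rfl | hj
  · exact (lt_of_mem_gapWindow he (Or.inl hj) hp hp').false
  · rcases lt_trichotomy e e' with h | rfl | h
    · exact (lt_of_mem_gapWindow he (Or.inr ⟨rfl, h⟩) hp hp').false
    · exact hne rfl
    · exact (lt_of_mem_gapWindow he' (Or.inr ⟨rfl, h⟩) hp' hp).false
  · exact (lt_of_mem_gapWindow he' (Or.inl hj) hp' hp).false

lemma mul_div_two_le_card_of_isAttractor (ht : 0 < t) {n : ℕ} (hn : blockStart m t s ≤ n)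
    {Γ : Finset ℕ} (hΓ : IsAttractor (word s m t n) Γ) : s * (t / 2) ≤ Γ.card := by
  calc s * (t / 2) = (Finset.range s ×ˢ Finset.range (t / 2)).card := by simp
    _ ≤ Γ.card := card_le_card_of_pairwiseDisjoint (A := fun je => gapWindow m t je.1 (2 * je.2))
        (fun a ha b hb hab => disjoint_gapWindow (by simp at ha; omega) (by simp at hb; omega) hab)
        fun je hje => exists_mem_gapWindow_of_isAttractor ht hn hΓ (by simp at hje; omega)
          (by simp at hje; omega)

lemma delta_word (ht : 0 < t) (hs : 0 < s) (hsm : s ≤ m + 1) {n : ℕ}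
    (hn : blockStart m t s ≤ n) (hn₀ : 0 < n) : delta (word s m t n) = (2 * s + m : ℕ) :=
  delta_eq_of_subCount_le (List.ne_nil_of_length_pos (by simpa using hn₀))
    (by rw [subCount_one, toFinset_word ht hs hn, Finset.card_range])
    fun _ hk => subCount_word_le ht hs hsm n hk

lemma exists_blockStart_bracket (hs : 0 < s) {n : ℕ} (hn : 2 * s + m ≤ n) :
    ∃ t, 0 < t ∧ blockStart m t s ≤ n ∧ n < blockStart m (t + 1) s := by
  have hmono : Monotone fun t => blockStart m t s :=
    fun _ _ h => Nat.add_le_add_left (Nat.mul_le_mul_left s (sepPos_strictMono.monotone h)) m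
  have hunb : n < blockStart m (n + 1) s := by
    have := sepPos_strictMono.id_le (n + 1)
    simp only [blockStart, id] at this ⊢
    nlinarith
  exact exists_bracket_of_monotone hmono (a := 1) (by simp [blockStart, sepPos]; omega)
    ⟨_, hunb⟩

end BlockWord

open BlockWord in
/-- There is a constant `c > 0` such that for every `n ≥ 2` and every integer
`δ ∈ [2..n]` there is a string of length `n` with measure exactly `δ` whose smallest
attractor has size at least `c·δ·log₂(2n/δ)`. -/
theorem exists_gamma_ge_delta_log : ∃ c : ℝ, 0 < c ∧
    ∀ n d : ℕ, 2 ≤ n → 2 ≤ d → d ≤ n →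
      ∃ S : List ℕ, S.length = n ∧ delta S = (d : ℚ) ∧
        c * (d : ℝ) * Real.logb 2 (2 * (n : ℝ) / (d : ℝ)) ≤ (gamma S : ℝ) := by
  refine ⟨1 / 40, by norm_num, fun n d hn hd hdn => ?_⟩
  obtain ⟨s, m, rfl, hs, hsm, hds⟩ :
      ∃ s m, 2 * s + m = d ∧ 0 < s ∧ s ≤ m + 1 ∧ d ≤ 4 * s :=
    ⟨(d + 1) / 3, d - 2 * ((d + 1) / 3), by omega, by omega, by omega, by omega⟩
  obtain ⟨t, ht, htn, hnt⟩ := exists_blockStart_bracket hs hdn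
  have hγ₁ : 2 * s + m ≤ gamma (word s m t n) := le_gamma fun Γ hΓ => by
    simpa [toFinset_word ht hs htn] using hΓ.card_toFinset_le
  have hγ₂ : s * (t / 2) ≤ gamma (word s m t n) :=
    le_gamma fun _ => mul_div_two_le_card_of_isAttractor ht htn
  have hγ : (2 * s + m) * (3 * t + 4) ≤ 40 * gamma (word s m t n) := by
    nlinarith [Nat.div_add_mod t 2, Nat.mod_lt t two_pos]
  have hlog := logb_two_mul_div_le (by omega) (by omega)
    (hnt.trans_le (blockStart_le_mul_pow m (t + 1) s))
  refine ⟨word s m t n, length_word s m t n, delta_word ht hs hsm htn (by omega), ?_⟩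
  calc 1 / 40 * ((2 * s + m : ℕ) : ℝ) * Real.logb 2 (2 * n / (2 * s + m : ℕ))
      ≤ 1 / 40 * ((2 * s + m : ℕ) : ℝ) * (3 * t + 4) := by gcongr
    _ ≤ gamma (word s m t n) := by
      have : ((2 * s + m : ℕ) : ℝ) * (3 * t + 4) ≤ 40 * gamma (word s m t n) := by
        exact_mod_cast hγ
      linarith
end
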